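/- arXiv:1609.07058 — 4 statements merged into one kernel-verified Lean document; each statement's English description precedes it below -/
import Mathlib

section
/- The alternating group Alt(n+2) admits the presentation ⟨x_1, ..., x_n | x_i³ = 1 for all i, (x_i x_j)² = 1 for all i ≠ j⟩, where x_i is realized as the 3-cycle (i, n+1, n+2). -/
/-!
Send `x_i` to the 3-cycle `(i, P, Q)` with `P = n + 1`, `Q = n + 2`, i.e. to `(i P) (P Q)`;
the relations hold there. This map is onto: its image contains `σ (P Q)` for every
transposition `σ` (since `(a b) = (a P) (b P) (a P)`), and an even permutation
`σ₁ σ₂ ⋯ σ₂ₖ` is the product of the elements `σ₁ (P Q)`, `(σ₂ (P Q))⁻¹`, ….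

Conversely `|G_m| ≤ (m + 2)! / 2` by induction on `m`. In `G_{m+1}` let `a = x_{m+1}` and
let `H` be the image of `G_m`. The `m + 3` right cosets `H`, `H a`, `H a⁻¹`, `H a⁻¹ x_i`
(`i ≤ m`) are permuted by right multiplication with every generator (coset enumeration),
so they cover `G_{m+1}`, and `|G_{m+1}| ≤ (m + 3) |G_m|`. A surjection onto `Alt(n + 2)` from a
group of at most its order is an isomorphism.
-/

open Equiv Equiv.Perm
open scoped Pointwise Nat

namespace Equiv.Perm

variable {α : Type*} [DecidableEq α]

theorem mem_or_mul_mem_of_swap_mul_mem [Finite α] {K : Subgroup (Perm α)} {t : Perm α}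
    (h : ∀ σ, IsSwap σ → σ * t ∈ K) (g : Perm α) : g ∈ K ∨ g * t ∈ K := by
  induction g using swap_induction_on' with
  | one => exact Or.inl K.one_mem
  | mul_swap f x y hxy ih =>
    have hσ := h (swap x y) ⟨x, y, hxy, rfl⟩
    rcases ih with hf | hf
    · exact Or.inr (by simpa only [mul_assoc] using K.mul_mem hf hσ)
    · have := K.mul_mem hf (K.inv_mem hσ)
      rw [mul_inv_rev, swap_inv, mul_assoc, mul_inv_cancel_left] at this
      exact Or.inl this

theorem alternatingGroup_le_of_swap_mul_mem [Fintype α] {K : Subgroup (Perm α)} {t : Perm α}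
    (ht : IsSwap t) (h : ∀ σ, IsSwap σ → σ * t ∈ K) : alternatingGroup α ≤ K := by
  intro g hg
  have h' (σ : Perm α) (hσ : IsSwap σ) : σ * t ∈ K ⊓ alternatingGroup α :=
    ⟨h σ hσ, mul_mem_alternatingGroup_of_isSwap hσ ht⟩
  rcases mem_or_mul_mem_of_swap_mul_mem h' g with hg' | hg'
  · exact hg'.1
  · have ht' : t ∈ alternatingGroup α := by
      simpa using mul_mem (inv_mem hg) hg'.2
    simp [mem_alternatingGroup, ht.sign_eq] at ht'

variable {P Q u v : α}

theorem swap_mul_mem_of_swap_mul_swap_mem {K : Subgroup (Perm α)} (hPQ : P ≠ Q)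
    (h : ∀ u, u ≠ P → u ≠ Q → swap u P * swap P Q ∈ K) (σ : Perm α) (hσ : IsSwap σ) :
    σ * swap P Q ∈ K := by
  have hP (a : α) (ha : a ≠ P) : swap a P * swap P Q ∈ K := by
    rcases eq_or_ne a Q with rfl | haQ
    · simp [swap_comm a P]
    · exact h a ha haQ
  obtain ⟨a, b, hab, rfl⟩ := hσ
  rcases eq_or_ne a P with rfl | haP
  · rw [swap_comm]; exact hP b hab.symm
  rcases eq_or_ne b P with rfl | hbP
  · exact hP a hab
  have hconj : swap a b * swap P Q =
      (swap a P * swap P Q) * (swap b P * swap P Q)⁻¹ * (swap a P * swap P Q) := by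
    rw [mul_inv_rev, swap_inv, swap_inv, swap_comm a P, ← swap_mul_swap_mul_swap hbP hab.symm]
    simp only [mul_assoc, swap_mul_self_mul]
  rw [hconj]
  exact mul_mem (mul_mem (hP a haP) (inv_mem (hP b hbP))) (hP a haP)

theorem alternatingGroup_le_of_swap_mul_swap_mem [Fintype α] {K : Subgroup (Perm α)}
    (hPQ : P ≠ Q) (h : ∀ u, u ≠ P → u ≠ Q → swap u P * swap P Q ∈ K) : alternatingGroup α ≤ K :=
  alternatingGroup_le_of_swap_mul_mem (swap_isSwap_iff.mpr hPQ)
    (swap_mul_mem_of_swap_mul_swap_mem hPQ h)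

theorem swap_mul_swap_pow_three [Fintype α] (huP : u ≠ P) (huQ : u ≠ Q) (hPQ : P ≠ Q) :
    (swap u P * swap P Q) ^ 3 = 1 := by
  rw [swap_comm u P, ← (isThreeCycle_swap_mul_swap_same huP.symm hPQ huQ).orderOf]
  exact pow_orderOf_eq_one _

theorem swap_mul_swap_mul_swap_mul_swap_sq (huv : u ≠ v) (huP : u ≠ P) (huQ : u ≠ Q)
    (hvP : v ≠ P) (hvQ : v ≠ Q) (hPQ : P ≠ Q) :
    (swap u P * swap P Q * (swap v P * swap P Q)) ^ 2 = 1 := by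
  have hconj : swap P Q * swap v P * swap P Q = swap Q v := swap_mul_swap_mul_swap hvP hvQ
  have hcomm : Commute (swap u P) (swap Q v) :=
    (disjoint_swap_swap (by simp [huv, huP, huQ, hPQ, hvP.symm, hvQ.symm])).commute
  rw [show swap u P * swap P Q * (swap v P * swap P Q) = swap u P * swap Q v by
    rw [← hconj]; group, hcomm.mul_pow, sq, sq, swap_mul_self, swap_mul_self, one_mul]

end Equiv.Perm

theorem Subgroup.mul_eq_univ_of_mul_subset {G : Type*} [Group G] {S : Set G}
    (hS : Submonoid.closure S = ⊤) (H : Subgroup G) {T : Set G} (h1 : 1 ∈ T)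
    (hTS : T * S ⊆ H * T) : (H : Set G) * T = Set.univ := by
  refine Set.eq_univ_of_forall fun g => ?_
  have hg : g ∈ Submonoid.closure S := hS ▸ Submonoid.mem_top g
  induction hg using Submonoid.closure_induction_right with
  | one => exact ⟨1, H.one_mem, 1, h1, one_mul 1⟩
  | mul_right x _ s hs ih =>
    obtain ⟨h, hh, t, ht, rfl⟩ := Set.mem_mul.mp ih
    obtain ⟨h', hh', t', ht', he⟩ := Set.mem_mul.mp (hTS (Set.mul_mem_mul ht hs))
    exact Set.mem_mul.mpr
      ⟨h * h', H.mul_mem hh hh', t', ht', by rw [mul_assoc, he, mul_assoc]⟩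

theorem Subgroup.finite_and_natCard_le_of_mul_subset {G : Type*} [Group G] {S : Set G}
    (hS : Submonoid.closure S = ⊤) (H : Subgroup G) [Finite H] {T : Set G} (hT : T.Finite)
    (h1 : 1 ∈ T) (hTS : T * S ⊆ H * T) : Finite G ∧ Nat.card G ≤ Nat.card H * Nat.card T := by
  have hU := H.mul_eq_univ_of_mul_subset hS h1 hTS
  refine ⟨Set.finite_univ_iff.mp (hU ▸ (Set.toFinite _).mul hT), ?_⟩
  rw [← Nat.card_univ, ← hU]
  exact Set.natCard_mul_le

def altRels (n : ℕ) : Set (FreeGroup (Fin n)) :=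
  {w : FreeGroup (Fin n) | ∃ i, w = (FreeGroup.of i) ^ 3} ∪
    {w : FreeGroup (Fin n) | ∃ i j, i ≠ j ∧ w = (FreeGroup.of i * FreeGroup.of j) ^ 2}

abbrev AltPresented (n : ℕ) := PresentedGroup (altRels n)

namespace AltPresented

open PresentedGroup

variable {n : ℕ}

theorem of_pow_three (i : Fin n) : (of i : AltPresented n) ^ 3 = 1 := by
  have h := one_of_mem (rels := altRels n) (Or.inl ⟨i, rfl⟩)
  rwa [map_pow] at h

theorem of_mul_of_sq {i j : Fin n} (hij : i ≠ j) : (of i * of j : AltPresented n) ^ 2 = 1 := by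
  have h := one_of_mem (rels := altRels n) (Or.inr ⟨i, j, hij, rfl⟩)
  rwa [map_pow, map_mul] at h

theorem inv_of (i : Fin n) : (of i : AltPresented n)⁻¹ = of i * of i :=
  inv_eq_of_mul_eq_one_left (by rw [← of_pow_three i, pow_succ, sq])

theorem inv_of_mul_of {i j : Fin n} (hij : i ≠ j) :
    (of i * of j : AltPresented n)⁻¹ = of i * of j :=
  inv_eq_of_mul_eq_one_right (by rw [← sq, of_mul_of_sq hij])

theorem of_mul_of {i j : Fin n} (hij : i ≠ j) :
    (of i * of j : AltPresented n) = (of j)⁻¹ * (of i)⁻¹ := by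
  rw [← mul_inv_rev, inv_of_mul_of hij]

theorem submonoid_closure_range_of :
    Submonoid.closure (Set.range (of : Fin n → AltPresented n)) = ⊤ := by
  rw [← Subgroup.closure_toSubmonoid_of_isOfFinOrder, closure_range_of, Subgroup.top_toSubmonoid]
  rintro _ ⟨i, rfl⟩
  exact isOfFinOrder_iff_pow_eq_one.mpr ⟨3, three_pos, of_pow_three i⟩

def lift {Γ : Type*} [Group Γ] (f : Fin n → Γ) (h3 : ∀ i, f i ^ 3 = 1)
    (h2 : ∀ i j, i ≠ j → (f i * f j) ^ 2 = 1) : AltPresented n →* Γ :=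
  toGroup (f := f) <| by
    rintro r (⟨i, rfl⟩ | ⟨i, j, hij, rfl⟩)
    · simp [h3]
    · simp [h2 i j hij]

theorem lift_of {Γ : Type*} [Group Γ] {f : Fin n → Γ} {h3 : ∀ i, f i ^ 3 = 1}
    {h2 : ∀ i j, i ≠ j → (f i * f j) ^ 2 = 1} (i : Fin n) : lift f h3 h2 (of i) = f i :=
  toGroup.of _

theorem inv_of_mul_of_mul_of {i k : Fin n} (hik : i ≠ k) :
    (of k : AltPresented n)⁻¹ * of i * of k = (of i)⁻¹ * ((of k)⁻¹ * of i) := by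
  calc (of k : AltPresented n)⁻¹ * of i * of k
      = (of k)⁻¹ * (of k)⁻¹ * (of i)⁻¹ := by rw [mul_assoc, of_mul_of hik, mul_assoc]
    _ = of k * (of i)⁻¹ := by rw [← mul_inv_rev, ← inv_of, inv_inv]
    _ = of k * of i * of i := by rw [inv_of, mul_assoc]
    _ = (of i)⁻¹ * ((of k)⁻¹ * of i) := by rw [of_mul_of hik.symm, mul_assoc]

theorem inv_of_mul_of_mul_of_self {i k : Fin n} (hik : i ≠ k) :
    (of k : AltPresented n)⁻¹ * of i * of i = of i * of k := by
  rw [mul_assoc, ← inv_of, ← mul_inv_rev, inv_of_mul_of hik]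

theorem inv_of_mul_of_mul_of_of_ne {i j k : Fin n} (hij : i ≠ j) (hik : i ≠ k) (hjk : j ≠ k) :
    (of k : AltPresented n)⁻¹ * of i * of j = of j * (of i)⁻¹ * ((of k)⁻¹ * of i) := by
  calc (of k : AltPresented n)⁻¹ * of i * of j
      = (of k)⁻¹ * (of j)⁻¹ * (of i)⁻¹ := by rw [mul_assoc, of_mul_of hij, mul_assoc]
    _ = of j * of k * (of i * of i) := by rw [← mul_inv_rev, inv_of_mul_of hjk, inv_of]
    _ = of j * ((of i)⁻¹ * (of k)⁻¹ * of i) := by rw [← of_mul_of hik.symm]; group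
    _ = of j * (of i)⁻¹ * ((of k)⁻¹ * of i) := by group

section CosetEnumeration

variable {m : ℕ}

def castSucc (m : ℕ) : AltPresented m →* AltPresented (m + 1) :=
  lift (fun i => of i.castSucc) (fun _ => of_pow_three _)
    (fun _ _ hij => of_mul_of_sq ((Fin.castSucc_injective _).ne hij))

theorem of_castSucc_mem_range (i : Fin m) :
    (of i.castSucc : AltPresented (m + 1)) ∈ (castSucc m).range :=
  ⟨of i, lift_of i⟩

def cosetReps (m : ℕ) : Set (AltPresented (m + 1)) :=
  {1, of (Fin.last m), (of (Fin.last m))⁻¹} ∪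
    Set.range fun i : Fin m => (of (Fin.last m))⁻¹ * of i.castSucc

theorem natCard_cosetReps_le : Nat.card (cosetReps m) ≤ m + 3 := by
  rw [Nat.card_coe_set_eq, cosetReps]
  set a : AltPresented (m + 1) := of (Fin.last m)
  have h3 : ({1, a, a⁻¹} : Set (AltPresented (m + 1))).ncard ≤ 3 :=
    (Set.ncard_insert_le _ _).trans (by grw [Set.ncard_insert_le, Set.ncard_singleton])
  have hm : (Set.range fun i : Fin m => a⁻¹ * of i.castSucc).ncard ≤ m := by
    simpa using Finite.card_range_le fun i : Fin m => a⁻¹ * of i.castSucc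
  exact (Set.ncard_union_le _ _).trans (by omega)

theorem one_mem_cosetReps : 1 ∈ cosetReps m := by simp [cosetReps]

theorem cosetReps_mul_subset :
    cosetReps m * Set.range of ⊆
      ((castSucc m).range : Set (AltPresented (m + 1))) * cosetReps m := by
  have hne (i : Fin m) : i.castSucc ≠ Fin.last m := (Fin.castSucc_lt_last i).ne
  have r1 := one_mem_cosetReps (m := m)
  have ra : of (Fin.last m) ∈ cosetReps m := by simp [cosetReps]
  have ra' : (of (Fin.last m))⁻¹ ∈ cosetReps m := by simp [cosetReps]
  have ri (i : Fin m) : (of (Fin.last m))⁻¹ * of i.castSucc ∈ cosetReps m :=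
    Or.inr ⟨i, rfl⟩
  have hx := of_castSucc_mem_range (m := m)
  rw [Set.mul_subset_iff]
  rintro _ ((rfl | rfl | rfl) | ⟨i, rfl⟩) _ ⟨s, rfl⟩ <;> refine Set.mem_mul.mpr ?_ <;>
    induction s using Fin.lastCases
  · exact ⟨1, one_mem _, _, ra, rfl⟩
  · exact ⟨_, hx _, 1, r1, by rw [one_mul, mul_one]⟩
  · exact ⟨1, one_mem _, _, ra', by rw [one_mul, inv_of]⟩
  · exact ⟨_, inv_mem (hx _), _, ra', (of_mul_of (hne _).symm).symm⟩
  · exact ⟨1, one_mem _, 1, r1, by rw [one_mul, inv_mul_cancel]⟩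
  · exact ⟨1, one_mem _, _, ri _, one_mul _⟩
  · exact ⟨_, inv_mem (hx i), _, ri i, (inv_of_mul_of_mul_of (hne i)).symm⟩
  · rename_i j
    rcases eq_or_ne i j with rfl | hij
    · exact ⟨_, hx i, _, ra, (inv_of_mul_of_mul_of_self (hne i)).symm⟩
    · exact ⟨_, mul_mem (hx j) (inv_mem (hx i)), _, ri i,
        (inv_of_mul_of_mul_of_of_ne ((Fin.castSucc_injective _).ne hij) (hne i) (hne j)).symm⟩

theorem finite_and_two_mul_natCard_le (m : ℕ) :
    Finite (AltPresented m) ∧ 2 * Nat.card (AltPresented m) ≤ (m + 2)! := by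
  induction m with
  | zero =>
    obtain ⟨hfin, hcard⟩ := (⊥ : Subgroup (AltPresented 0)).finite_and_natCard_le_of_mul_subset
      submonoid_closure_range_of (Set.finite_singleton 1) (Set.mem_singleton 1) (by simp)
    exact ⟨hfin, by simpa using hcard⟩
  | succ m ih =>
    obtain ⟨_, ih⟩ := ih
    have : Finite (castSucc m).range := .of_surjective _ (castSucc m).rangeRestrict_surjective
    obtain ⟨hfin, hcard⟩ :=
      (castSucc m).range.finite_and_natCard_le_of_mul_subset (T := cosetReps m)
        submonoid_closure_range_of ((Set.toFinite _).union (Set.finite_range _)) one_mem_cosetReps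
        cosetReps_mul_subset
    refine ⟨hfin, ?_⟩
    have hH : Nat.card (castSucc m).range ≤ Nat.card (AltPresented m) :=
      Nat.card_le_card_of_surjective _ (castSucc m).rangeRestrict_surjective
    calc 2 * Nat.card (AltPresented (m + 1))
        ≤ 2 * Nat.card (AltPresented m) * (m + 3) := by
          grw [hcard, hH, natCard_cosetReps_le, mul_assoc]
      _ ≤ (m + 2)! * (m + 3) := by gcongr
      _ = (m + 1 + 2)! := by rw [mul_comm, ← Nat.factorial_succ]

end CosetEnumeration

section Generators

variable (n : ℕ)

theorem castSucc_castSucc_ne_castSucc_last (i : Fin n) :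
    i.castSucc.castSucc ≠ (Fin.last n).castSucc :=
  (Fin.castSucc_lt_castSucc_iff.mpr (Fin.castSucc_lt_last i)).ne

def threeCycleGen (i : Fin n) : alternatingGroup (Fin (n + 2)) :=
  ⟨swap i.castSucc.castSucc (Fin.last n).castSucc *
      swap (Fin.last n).castSucc (Fin.last (n + 1)),
    mul_mem_alternatingGroup_of_isSwap
      (swap_isSwap_iff.mpr (castSucc_castSucc_ne_castSucc_last n i))
      (swap_isSwap_iff.mpr (Fin.castSucc_lt_last _).ne)⟩

def toAlternating : AltPresented n →* alternatingGroup (Fin (n + 2)) :=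
  lift (threeCycleGen n)
    (fun i => Subtype.ext <| swap_mul_swap_pow_three (castSucc_castSucc_ne_castSucc_last n i)
      (Fin.castSucc_lt_last _).ne (Fin.castSucc_lt_last _).ne)
    (fun i j hij => Subtype.ext <| swap_mul_swap_mul_swap_mul_swap_sq
      ((Fin.castSucc_injective _).ne ((Fin.castSucc_injective _).ne hij))
      (castSucc_castSucc_ne_castSucc_last n i) (Fin.castSucc_lt_last _).ne
      (castSucc_castSucc_ne_castSucc_last n j) (Fin.castSucc_lt_last _).ne
      (Fin.castSucc_lt_last _).ne)

theorem toAlternating_of (i : Fin n) : toAlternating n (of i) = threeCycleGen n i :=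
  lift_of i

theorem toAlternating_surjective : Function.Surjective (toAlternating n) := by
  intro g
  obtain ⟨x, hx⟩ : (g : Perm (Fin (n + 2))) ∈
      ((alternatingGroup _).subtype.comp (toAlternating n)).range := by
    refine alternatingGroup_le_of_swap_mul_swap_mem (Fin.castSucc_lt_last (Fin.last n)).ne
      (fun u hP hQ => ?_) g.2
    obtain ⟨v, rfl⟩ := Fin.exists_castSucc_eq.mpr hQ
    obtain ⟨i, rfl⟩ := Fin.exists_castSucc_eq.mpr fun h => hP (congrArg Fin.castSucc h)
    exact ⟨of i, congrArg Subtype.val (toAlternating_of n i)⟩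
  exact ⟨x, Subtype.ext hx⟩

end Generators

end AltPresented

open AltPresented in
/-- The alternating group `Alt(n+2)` has the presentation
`⟨x_1, …, x_n ∣ x_i³, (x_i x_j)² (i ≠ j)⟩`, where `x_i` is realized as the
3-cycle `(i, n+1, n+2)`. -/
theorem alternating_presentation (n : ℕ) :
    ∃ e : PresentedGroup
        ({w : FreeGroup (Fin n) | ∃ i, w = (FreeGroup.of i) ^ 3} ∪
          {w : FreeGroup (Fin n) | ∃ i j, i ≠ j ∧
            w = (FreeGroup.of i * FreeGroup.of j) ^ 2})
        ≃* alternatingGroup (Fin (n + 2)),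
      ∀ i : Fin n,
        (e (PresentedGroup.of i) : Equiv.Perm (Fin (n + 2)))
          = Equiv.swap (Fin.castLE (by omega) i) ⟨n, by omega⟩
              * Equiv.swap ⟨n, by omega⟩ ⟨n + 1, by omega⟩ := by
  obtain ⟨_, hcard⟩ := finite_and_two_mul_natCard_le n
  have hle : Nat.card (AltPresented n) ≤ Nat.card (alternatingGroup (Fin (n + 2))) := by
    have := two_mul_nat_card_alternatingGroup (α := Fin (n + 2))
    rw [Nat.card_perm, Nat.card_fin] at this
    omega
  refine ⟨MulEquiv.ofBijective _ ((toAlternating_surjective n).bijective_of_nat_card_le hle),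
    fun i => ?_⟩
  exact congrArg Subtype.val (toAlternating_of n i)
end

section
/- The group with infinite presentation ⟨x_0, x_1, x_2, ... | x_k⁻¹ x_l x_k = x_{l+1} for all k < l⟩ is isomorphic to the group with finite presentation ⟨x_0, x_1 | x_0⁻³ x_1 x_0³ = x_1⁻¹ x_0⁻² x_1 x_0² x_1, x_0⁻² x_1 x_0² = x_1⁻¹ x_0⁻¹ x_1 x_0 x_1⟩ (Thompson's group F), via the map fixing x_0 and x_1. -/
namespace ThompsonFAux

abbrev relsInf : Set (FreeGroup ℕ) := {w : FreeGroup ℕ | ∃ k l : ℕ, k < l ∧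
    w = (FreeGroup.of k)⁻¹ * FreeGroup.of l * FreeGroup.of k * (FreeGroup.of (l + 1))⁻¹}

abbrev relsFin : Set (FreeGroup (Fin 2)) :=
    {(FreeGroup.of (0 : Fin 2))⁻¹ ^ 3 * FreeGroup.of 1 * FreeGroup.of 0 ^ 3 *
        ((FreeGroup.of (1 : Fin 2))⁻¹ * (FreeGroup.of (0 : Fin 2))⁻¹ ^ 2 *
          FreeGroup.of 1 * FreeGroup.of 0 ^ 2 * FreeGroup.of 1)⁻¹,
      (FreeGroup.of (0 : Fin 2))⁻¹ ^ 2 * FreeGroup.of 1 * FreeGroup.of 0 ^ 2 *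
        ((FreeGroup.of (1 : Fin 2))⁻¹ * (FreeGroup.of (0 : Fin 2))⁻¹ *
          FreeGroup.of 1 * FreeGroup.of 0 * FreeGroup.of 1)⁻¹}

lemma mk_rel_one {α : Type*} {rels : Set (FreeGroup α)} {r : FreeGroup α} (h : r ∈ rels) :
    PresentedGroup.mk rels r = 1 := by
  change (QuotientGroup.mk r : FreeGroup α ⧸ Subgroup.normalClosure rels) = 1
  exact (QuotientGroup.eq_one_iff r).mpr (Subgroup.subset_normalClosure h)

abbrev Ffin := PresentedGroup relsFin
abbrev Finf := PresentedGroup relsInf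

noncomputable def a : Ffin := PresentedGroup.of 0
noncomputable def b : Ffin := PresentedGroup.of 1

/-- `A n` represents `x_{n+1}` in the finitely presented group. -/
noncomputable def A (n : ℕ) : Ffin := (a⁻¹) ^ n * b * a ^ n

lemma A_zero : A 0 = b := by simp [A]

lemma A_succ (n : ℕ) : A (n + 1) = a⁻¹ * A n * a := by
  simp only [A, pow_succ, pow_succ']; group

lemma mk_of {α : Type*} {rels : Set (FreeGroup α)} (x : α) :
    PresentedGroup.mk rels (FreeGroup.of x) = PresentedGroup.of x := rfl

lemma key0 : b⁻¹ * A 1 * b = A 2 := by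
  have h := mk_rel_one (rels := relsFin) (Set.mem_insert_of_mem _ rfl)
  simp only [map_mul, map_inv, map_pow, mk_of] at h
  rw [mul_inv_eq_one] at h
  simp only [A, a, b, pow_one]
  rw [h]; group

lemma key1 : b⁻¹ * A 2 * b = A 3 := by
  have h := mk_rel_one (rels := relsFin) (Set.mem_insert _ _)
  simp only [map_mul, map_inv, map_pow, mk_of] at h
  rw [mul_inv_eq_one] at h
  simp only [A, a, b]
  rw [h]; group

lemma A_one : A 1 = a⁻¹ * b * a := by
  have e : A 1 = a⁻¹ * A 0 * a := A_succ 0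
  rw [e, A_zero]

lemma step (m : ℕ) (h1 : b⁻¹ * A (m + 1) * b = A (m + 2))
    (h2 : b⁻¹ * A (m + 2) * b = A (m + 3)) : b⁻¹ * A (m + 3) * b = A (m + 4) := by
  have e2 : A (m + 2) = a⁻¹ * A (m + 1) * a := A_succ (m + 1)
  have e3 : A (m + 3) = a⁻¹ * A (m + 2) * a := A_succ (m + 2)
  have e4 : A (m + 4) = a⁻¹ * A (m + 3) * a := A_succ (m + 3)
  have c1 : (A 1)⁻¹ * A (m + 2) * A 1 = A (m + 3) := by
    rw [A_one, e2, e3, ← h1]; group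
  have c2 : (A 2)⁻¹ * A (m + 3) * A 2 = A (m + 4) := by
    have eA2 : A 2 = a⁻¹ * A 1 * a := A_succ 1
    rw [eA2, e3, e4, ← c1]; group
  have comm : A 1 * b = b * A 2 := by
    calc A 1 * b = b * (b⁻¹ * A 1 * b) := by group
    _ = b * A 2 := by rw [key0]
  have hinv : b⁻¹ * (A 1)⁻¹ = (A 2)⁻¹ * b⁻¹ := by
    rw [← mul_inv_rev, ← mul_inv_rev, comm]
  calc b⁻¹ * A (m + 3) * b = b⁻¹ * ((A 1)⁻¹ * A (m + 2) * A 1) * b := by rw [c1]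
    _ = (b⁻¹ * (A 1)⁻¹) * A (m + 2) * (A 1 * b) := by group
    _ = ((A 2)⁻¹ * b⁻¹) * A (m + 2) * (b * A 2) := by rw [hinv, comm]
    _ = (A 2)⁻¹ * (b⁻¹ * A (m + 2) * b) * A 2 := by group
    _ = (A 2)⁻¹ * A (m + 3) * A 2 := by rw [h2]
    _ = A (m + 4) := c2

lemma key : ∀ m : ℕ, b⁻¹ * A (m + 1) * b = A (m + 2) := by
  have H : ∀ m : ℕ, (b⁻¹ * A (m + 1) * b = A (m + 2)) ∧
      (b⁻¹ * A (m + 2) * b = A (m + 3)) := by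
    intro m
    induction m with
    | zero => exact ⟨key0, key1⟩
    | succ n ih => exact ⟨ih.2, step n ih.1 ih.2⟩
  exact fun m => (H m).1

lemma shift (j n : ℕ) : (a⁻¹) ^ j * A n * a ^ j = A (n + j) := by
  induction j with
  | zero => simp
  | succ k ih =>
    have e : A (n + (k + 1)) = a⁻¹ * A (n + k) * a := A_succ (n + k)
    rw [e, pow_succ', pow_succ, ← ih]; group

lemma conj_gen {k l : ℕ} (h : k < l) : (A k)⁻¹ * A l * A k = A (l + 1) := by
  obtain ⟨m, rfl⟩ : ∃ m, l = k + (m + 1) := ⟨l - k - 1, by omega⟩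
  have hl : A (k + (m + 1)) = (a⁻¹) ^ k * A (m + 1) * a ^ k := by
    rw [shift]; ring_nf
  have hl1 : A (k + (m + 1) + 1) = (a⁻¹) ^ k * A (m + 2) * a ^ k := by
    rw [shift]; ring_nf
  have hk : A k = (a⁻¹) ^ k * b * a ^ k := rfl
  rw [hl, hl1, hk, ← key m]; group

noncomputable def f : ℕ → Ffin
  | 0 => a
  | n + 1 => A n

lemma hf : ∀ r ∈ relsInf, FreeGroup.lift f r = 1 := by
  rintro r ⟨k, l, hkl, rfl⟩
  simp only [map_mul, map_inv, FreeGroup.lift_apply_of]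
  rw [mul_inv_eq_one]
  obtain ⟨l', rfl⟩ : ∃ l', l = l' + 1 := ⟨l - 1, by omega⟩
  cases k with
  | zero =>
    show a⁻¹ * A l' * a = A (l' + 1)
    rw [A_succ]
  | succ k' =>
    exact conj_gen (by omega : k' < l')

noncomputable def φ : Finf →* Ffin := PresentedGroup.toGroup hf

noncomputable def g : Fin 2 → Finf := fun i => PresentedGroup.of (i : ℕ)

noncomputable def Y (n : ℕ) : Finf := PresentedGroup.of n

lemma relInf {k l : ℕ} (h : k < l) : (Y k)⁻¹ * Y l * Y k = Y (l + 1) := by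
  have hmem : ((FreeGroup.of k)⁻¹ * FreeGroup.of l * FreeGroup.of k
      * (FreeGroup.of (l + 1))⁻¹) ∈ relsInf := ⟨k, l, h, rfl⟩
  have h1 := mk_rel_one hmem
  simp only [map_mul, map_inv, mk_of] at h1
  rw [mul_inv_eq_one] at h1
  exact h1

lemma pow0 : ∀ n : ℕ, ((Y 0)⁻¹) ^ n * Y 1 * (Y 0) ^ n = Y (n + 1) := by
  intro n
  induction n with
  | zero => simp
  | succ k ih =>
    have e : ((Y 0)⁻¹) ^ (k + 1) * Y 1 * (Y 0) ^ (k + 1)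
        = (Y 0)⁻¹ * ((Y 0)⁻¹ ^ k * Y 1 * Y 0 ^ k) * Y 0 := by
      rw [pow_succ', pow_succ]; group
    rw [e, ih]
    exact relInf (by omega)

lemma hg : ∀ r ∈ relsFin, FreeGroup.lift g r = 1 := by
  rintro r (rfl | rfl)
  · simp only [map_mul, map_inv, map_pow, FreeGroup.lift_apply_of]
    rw [mul_inv_eq_one]
    show (Y 0)⁻¹ ^ 3 * Y 1 * Y 0 ^ 3 = (Y 1)⁻¹ * (Y 0)⁻¹ ^ 2 * Y 1 * Y 0 ^ 2 * Y 1
    rw [pow0 3]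
    have h3 : (Y 0)⁻¹ ^ 2 * Y 1 * Y 0 ^ 2 = Y 3 := pow0 2
    have h4 : (Y 1)⁻¹ * Y 3 * Y 1 = Y 4 := relInf (by omega)
    calc Y 4 = (Y 1)⁻¹ * Y 3 * Y 1 := h4.symm
      _ = (Y 1)⁻¹ * ((Y 0)⁻¹ ^ 2 * Y 1 * Y 0 ^ 2) * Y 1 := by rw [h3]
      _ = (Y 1)⁻¹ * (Y 0)⁻¹ ^ 2 * Y 1 * Y 0 ^ 2 * Y 1 := by group
  · simp only [map_mul, map_inv, map_pow, FreeGroup.lift_apply_of]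
    rw [mul_inv_eq_one]
    show (Y 0)⁻¹ ^ 2 * Y 1 * Y 0 ^ 2 = (Y 1)⁻¹ * (Y 0)⁻¹ * Y 1 * Y 0 * Y 1
    rw [pow0 2]
    have h2 : (Y 0)⁻¹ * Y 1 * Y 0 = Y 2 := by
      have := pow0 1; simpa using this
    have h3 : (Y 1)⁻¹ * Y 2 * Y 1 = Y 3 := relInf (by omega)
    calc Y 3 = (Y 1)⁻¹ * Y 2 * Y 1 := h3.symm
      _ = (Y 1)⁻¹ * ((Y 0)⁻¹ * Y 1 * Y 0) * Y 1 := by rw [h2]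
      _ = (Y 1)⁻¹ * (Y 0)⁻¹ * Y 1 * Y 0 * Y 1 := by group

noncomputable def ψ : Ffin →* Finf := PresentedGroup.toGroup hg

lemma ψφ : ψ.comp φ = MonoidHom.id Finf := by
  apply PresentedGroup.ext
  intro x
  simp only [MonoidHom.comp_apply, MonoidHom.id_apply, φ, PresentedGroup.toGroup.of]
  cases x with
  | zero =>
    show ψ (f 0) = _
    simp [ψ, f, a, PresentedGroup.toGroup.of, g]
  | succ n =>
    show ψ (A n) = _
    simp only [A, map_mul, map_pow, map_inv]
    have ha : ψ a = Y 0 := by simp [ψ, a, PresentedGroup.toGroup.of, g, Y]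
    have hb : ψ b = Y 1 := by simp [ψ, b, PresentedGroup.toGroup.of, g, Y]
    rw [ha, hb, pow0 n]
    rfl

lemma φψ : φ.comp ψ = MonoidHom.id Ffin := by
  apply PresentedGroup.ext
  intro x
  simp only [MonoidHom.comp_apply, MonoidHom.id_apply, ψ, PresentedGroup.toGroup.of]
  fin_cases x
  · show φ (Y 0) = _
    simp [φ, Y, PresentedGroup.toGroup.of, f, a]
  · show φ (Y 1) = _
    simp [φ, Y, PresentedGroup.toGroup.of, f, A, b]

end ThompsonFAux

open ThompsonFAux in
/-- The infinitely presented group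
`⟨x_0, x_1, … ∣ x_k⁻¹ x_l x_k = x_{l+1} (k < l)⟩` is isomorphic to the finitely
presented group
`⟨x_0, x_1 ∣ x_0⁻³ x_1 x_0³ = x_1⁻¹ x_0⁻² x_1 x_0² x_1,
 x_0⁻² x_1 x_0² = x_1⁻¹ x_0⁻¹ x_1 x_0 x_1⟩` (Thompson's group `F`) via the map
fixing `x_0` and `x_1`. -/
theorem thompsonF_finite_presentation :
    ∃ e : PresentedGroup {w : FreeGroup ℕ | ∃ k l : ℕ, k < l ∧
            w = (FreeGroup.of k)⁻¹ * FreeGroup.of l * FreeGroup.of k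
                  * (FreeGroup.of (l + 1))⁻¹}
          ≃* PresentedGroup
            ({(FreeGroup.of (0 : Fin 2))⁻¹ ^ 3 * FreeGroup.of 1 * FreeGroup.of 0 ^ 3 *
                ((FreeGroup.of (1 : Fin 2))⁻¹ * (FreeGroup.of (0 : Fin 2))⁻¹ ^ 2 *
                  FreeGroup.of 1 * FreeGroup.of 0 ^ 2 * FreeGroup.of 1)⁻¹,
              (FreeGroup.of (0 : Fin 2))⁻¹ ^ 2 * FreeGroup.of 1 * FreeGroup.of 0 ^ 2 *
                ((FreeGroup.of (1 : Fin 2))⁻¹ * (FreeGroup.of (0 : Fin 2))⁻¹ *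
                  FreeGroup.of 1 * FreeGroup.of 0 * FreeGroup.of 1)⁻¹}
              : Set (FreeGroup (Fin 2))),
      e (PresentedGroup.of 0) = PresentedGroup.of 0 ∧
        e (PresentedGroup.of 1) = PresentedGroup.of 1 := by
  refine ⟨MonoidHom.toMulEquiv φ ψ ψφ φψ, ?_, ?_⟩
  · show φ (PresentedGroup.of 0) = _
    simp [φ, PresentedGroup.toGroup.of, f, a]
  · show φ (PresentedGroup.of 1) = _
    simp [φ, PresentedGroup.toGroup.of, f, A, b]
end

section
/- In the group with presentation ⟨x_0, x_1, x_2, ... | x_k⁻¹ x_l x_k = x_{l+1} for all k < l⟩, all relations x_k⁻¹ x_l x_k = x_{l+1} with k < l are consequences of the finite subset of relations with (k, l) ∈ {(0,1), (0,2), (0,3), (1,2), (1,3), (2,3)}. -/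
/-- Truncation: in a group generated by elements `x_0, x_1, x_2, …`, if the
relations `x_k⁻¹ x_l x_k = x_{l+1}` hold for the six pairs
`(k,l) ∈ {(0,1), (0,2), (0,3), (1,2), (1,3), (2,3)}` and `x_n` is defined for
`n ≥ 4` by `x_n = x_0⁻¹ x_{n-1} x_0`, then `x_k⁻¹ x_l x_k = x_{l+1}` holds for
all `k < l`. -/
theorem thompsonF_relations_from_six (G : Type*) [Group G] (x : ℕ → G)
    (h01 : (x 0)⁻¹ * x 1 * x 0 = x 2)
    (h02 : (x 0)⁻¹ * x 2 * x 0 = x 3)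
    (h03 : (x 0)⁻¹ * x 3 * x 0 = x 4)
    (h12 : (x 1)⁻¹ * x 2 * x 1 = x 3)
    (h13 : (x 1)⁻¹ * x 3 * x 1 = x 4)
    (h23 : (x 2)⁻¹ * x 3 * x 2 = x 4)
    (hdef : ∀ n : ℕ, 4 ≤ n → x n = (x 0)⁻¹ * x (n - 1) * x 0) :
    ∀ k l : ℕ, k < l → (x k)⁻¹ * x l * x k = x (l + 1) := by
  have A : ∀ l : ℕ, 1 ≤ l → (x 0)⁻¹ * x l * x 0 = x (l + 1) := by
    intro l hl
    match l, hl with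
    | 1, _ => exact h01
    | 2, _ => exact h02
    | 3, _ => exact h03
    | n + 4, _ =>
      rw [hdef (n + 4 + 1) (by omega)]
      norm_num
  have h12' : x 2 * x 1 = x 1 * x 3 := by rw [← h12]; group
  intro k l
  induction l using Nat.strong_induction_on generalizing k with
  | _ l IH =>
    intro hkl
    have step2 : ∀ k : ℕ, 2 ≤ k → k < l → (x k)⁻¹ * x l * x k = x (l + 1) := by
      intro k hk2 hkl
      obtain ⟨k', rfl⟩ : ∃ k', k = k' + 2 := ⟨k - 2, by omega⟩
      obtain ⟨l', rfl⟩ : ∃ l', l = l' + 1 := ⟨l - 1, by omega⟩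
      have ek : (x 0)⁻¹ * x (k' + 1) * x 0 = x (k' + 2) := A (k' + 1) (by omega)
      have el : (x 0)⁻¹ * x l' * x 0 = x (l' + 1) := A l' (by omega)
      have el1 : (x 0)⁻¹ * x (l' + 1) * x 0 = x (l' + 2) := A (l' + 1) (by omega)
      have ih : (x (k' + 1))⁻¹ * x l' * x (k' + 1) = x (l' + 1) :=
        IH l' (by omega) (k' + 1) (by omega)
      calc (x (k' + 2))⁻¹ * x (l' + 1) * x (k' + 2)
          = ((x 0)⁻¹ * x (k' + 1) * x 0)⁻¹ * ((x 0)⁻¹ * x l' * x 0) *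
            ((x 0)⁻¹ * x (k' + 1) * x 0) := by rw [ek, el]
        _ = (x 0)⁻¹ * ((x (k' + 1))⁻¹ * x l' * x (k' + 1)) * x 0 := by group
        _ = (x 0)⁻¹ * x (l' + 1) * x 0 := by rw [ih]
        _ = x (l' + 2) := el1
    rcases Nat.lt_or_ge k 2 with hk | hk
    · interval_cases k
      · exact A l (by omega)
      · -- k = 1
        rcases Nat.lt_or_ge l 4 with hl | hl
        · interval_cases l
          · exact h12
          · exact h13
        · obtain ⟨l', rfl⟩ : ∃ l', l = l' + 1 := ⟨l - 1, by omega⟩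
          have ih1 : (x 1)⁻¹ * x l' * x 1 = x (l' + 1) := IH l' (by omega) 1 (by omega)
          have ih2 : (x 2)⁻¹ * x l' * x 2 = x (l' + 1) := IH l' (by omega) 2 (by omega)
          have s3 : (x 3)⁻¹ * x (l' + 1) * x 3 = x (l' + 2) := step2 3 (by omega) (by omega)
          calc (x 1)⁻¹ * x (l' + 1) * x 1
              = (x 1)⁻¹ * ((x 2)⁻¹ * x l' * x 2) * x 1 := by rw [ih2]
            _ = (x 2 * x 1)⁻¹ * x l' * (x 2 * x 1) := by group
            _ = (x 1 * x 3)⁻¹ * x l' * (x 1 * x 3) := by rw [h12']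
            _ = (x 3)⁻¹ * ((x 1)⁻¹ * x l' * x 1) * x 3 := by group
            _ = (x 3)⁻¹ * x (l' + 1) * x 3 := by rw [ih1]
            _ = x (l' + 2) := s3
    · exact step2 k hk hkl
end

section
/- Let G = ⟨Y | R⟩, let Q = ⟨Z | T⟩ act on Y by permutations with Q(R) = R, and suppose the induced semidirect product presentation holds: G ⋊ Q ≅ ⟨Y₀, Z | R̂₀, T, [Stab_Q(y), y] for y ∈ Y₀⟩ (as in Lemma 'burnside-1'). If additionally Q ≤ G acts by conjugation, Q is finitely presented, the numbers of Q-orbits on Y and on R are finite, and each stabilizer Stab_Q(y) (y ∈ Y₀) is finitely generated, then G is finitely presented. -/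
/-- A group is finitely presented if it is isomorphic to the quotient of a free
group on finitely many generators by the normal closure of finitely many
relators. -/
def IsFinitelyPresentedGroup (G : Type*) [Group G] : Prop :=
  ∃ (n : ℕ) (R : Set (FreeGroup (Fin n))), R.Finite ∧ Nonempty (PresentedGroup R ≃* G)

/-!
Let `Ω` be the set of `Q`-orbits on `Y`, and for `y ∈ Y` let `t_y ∈ Q` carry the chosen
representative `ω.out` of its orbit to `y`. In the free product `F(Ω) ∗ Q` impose the finitely many
relations saying that the chosen generators of `Stab_Q(ω.out)` commute with the letter `ω`, and
that the orbit representatives `R₀` of `R` hold in the letters `ŷ = t_y ω t_y⁻¹`. Thanks to the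
stabilizer relations, `t ω t⁻¹` depends only on `t • ω.out`, so `Q` permutes the letters `ŷ` as it
permutes `Y`. Hence every relator of `R`, a `Q`-translate of one in `R₀`, holds as well, and
`y ↦ ŷ` is a section of the evident map from this finitely presented group onto `G`. A retract
of a finitely presented group is finitely presented.
-/

theorem isFinitelyPresentedGroup_iff {G : Type*} [Group G] :
    IsFinitelyPresentedGroup G ↔ Group.IsFinitelyPresented G := by
  constructor
  · rintro ⟨n, R, hR, ⟨e⟩⟩
    have := hR.to_subtype
    exact .equiv e
  · intro
    obtain ⟨n, R, hR, ⟨e⟩⟩ := Group.IsFinitelyPresented.exists_mulEquiv_presentedGroup (G := G)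
    exact ⟨n, R, hR, ⟨e.symm⟩⟩

theorem MonoidHom.ker_eq_normalClosure_of_leftInverse {P G : Type*} [Group P] [Group G]
    {ψ : P →* G} {χ : G →* P} (h : Function.LeftInverse ψ χ) {X : Set P}
    (hX : Subgroup.closure X = ⊤) :
    ψ.ker = Subgroup.normalClosure ((fun x => x⁻¹ * χ (ψ x)) '' X) := by
  set N := Subgroup.normalClosure ((fun x => x⁻¹ * χ (ψ x)) '' X)
  refine le_antisymm (fun p hp => ?_) (Subgroup.normalClosure_le_normal ?_)
  · have hπ : QuotientGroup.mk' N = (QuotientGroup.mk' N).comp (χ.comp ψ) := by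
      refine MonoidHom.eq_of_eqOn_dense hX fun x hx => ?_
      exact QuotientGroup.eq.mpr (Subgroup.subset_normalClosure (Set.mem_image_of_mem _ hx))
    have hp' := DFunLike.congr_fun hπ p
    rw [MonoidHom.comp_apply, MonoidHom.comp_apply, MonoidHom.mem_ker.mp hp, map_one,
      map_one] at hp'
    exact (QuotientGroup.eq_one_iff p).mp hp'
  · rintro _ ⟨x, -, rfl⟩
    simp [MonoidHom.mem_ker, h (ψ x)]

instance Group.IsFinitelyPresented.fg {P : Type*} [Group P] [h : Group.IsFinitelyPresented P] :
    Group.FG P := by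
  obtain ⟨n, φ, hφ, -⟩ := h
  exact Group.fg_of_surjective hφ

theorem Group.IsFinitelyPresented.of_leftInverse {P G : Type*} [Group P] [Group G]
    [Group.IsFinitelyPresented P] {ψ : P →* G} {χ : G →* P} (h : Function.LeftInverse ψ χ) :
    Group.IsFinitelyPresented G := by
  obtain ⟨X, hXtop, hX⟩ := Group.fg_iff.mp (inferInstance : Group.FG P)
  exact .of_surjective ψ h.surjective
    ⟨_, hX.image _, (MonoidHom.ker_eq_normalClosure_of_leftInverse h hXtop).symm⟩

open MulAction Monoid.Coprod
open scoped commutatorElement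

theorem MulAction.orbitRel.Quotient.finite_of_forall_exists_smul {G Y : Type*} [Group G]
    [MulAction G Y] {Y₀ : Set Y} (hY₀ : Y₀.Finite) (h : ∀ y : Y, ∃ g : G, ∃ y₀ ∈ Y₀, y = g • y₀) :
    Finite (orbitRel.Quotient G Y) := by
  have := hY₀.to_subtype
  refine Finite.of_surjective (fun y₀ : Y₀ => (Quotient.mk'' (y₀ : Y) : orbitRel.Quotient G Y)) ?_
  rintro ⟨y⟩
  obtain ⟨g, y₀, hy₀, rfl⟩ := h y
  exact ⟨⟨y₀, hy₀⟩, Quotient.sound' (orbitRel_apply.mpr ⟨g⁻¹, inv_smul_smul g y₀⟩)⟩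

theorem MulAction.orbitRel.Quotient.exists_smul_out_eq {G Y : Type*} [Group G] [MulAction G Y]
    (y : Y) : ∃ g : G, g • (Quotient.mk'' y : orbitRel.Quotient G Y).out = y := by
  obtain ⟨g, hg⟩ := Quotient.exact' (Quotient.out_eq' (Quotient.mk'' y : orbitRel.Quotient G Y))
  exact ⟨g⁻¹, inv_smul_eq_iff.mpr hg.symm⟩

namespace Burnside

variable {Y : Type*} {R : Set (FreeGroup Y)} (Q : Subgroup (PresentedGroup R)) [MulAction Q Y]

abbrev Cover := Monoid.Coprod (FreeGroup (orbitRel.Quotient Q Y)) Q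

noncomputable def transporter (y : Y) : Q := (orbitRel.Quotient.exists_smul_out_eq y).choose

theorem transporter_smul_out (y : Y) :
    transporter Q y • (Quotient.mk'' y : orbitRel.Quotient Q Y).out = y :=
  (orbitRel.Quotient.exists_smul_out_eq y).choose_spec

def orbitConj (q : Q) (ω : orbitRel.Quotient Q Y) : Cover Q :=
  inr q * inl (FreeGroup.of ω) * (inr q)⁻¹

/-- The letter `ŷ = t_y ω t_y⁻¹` of the proof sketch, with `t_y = transporter Q y`. -/
noncomputable def conjGen (y : Y) : Cover Q :=
  orbitConj Q (transporter Q y) (Quotient.mk'' y)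

def relators (F : orbitRel.Quotient Q Y → Set Q) (R₀ : Set (FreeGroup Y)) : Set (Cover Q) :=
  (⋃ ω, (fun s => ⁅(inr s : Cover Q), (inl (FreeGroup.of ω) : Cover Q)⁆) '' F ω) ∪
    FreeGroup.lift (conjGen Q) '' R₀

abbrev Presentation (F : orbitRel.Quotient Q Y → Set Q) (R₀ : Set (FreeGroup Y)) : Type _ :=
  Cover Q ⧸ Subgroup.normalClosure (relators Q F R₀)

def IsConjAction : Prop :=
  ∀ (q : Q) (y : Y),
    PresentedGroup.of (q • y) = (q : PresentedGroup R) * .of y * (q : PresentedGroup R)⁻¹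

variable {Q}

theorem relators_finite [Finite (orbitRel.Quotient Q Y)] {F : orbitRel.Quotient Q Y → Set Q}
    (hF : ∀ ω, (F ω).Finite) {R₀ : Set (FreeGroup Y)} (hR₀ : R₀.Finite) :
    (relators Q F R₀).Finite := by
  unfold relators
  exact (Set.finite_iUnion fun ω => (hF ω).image _).union (hR₀.image _)

section Presentation

variable {F : orbitRel.Quotient Q Y → Set Q} {R₀ : Set (FreeGroup Y)}

local notation "π" => QuotientGroup.mk' (Subgroup.normalClosure (relators Q F R₀))

theorem mk_eq_one_of_mem_relators {x : Cover Q} (hx : x ∈ relators Q F R₀) : π x = 1 :=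
  (QuotientGroup.eq_one_iff x).mpr (Subgroup.subset_normalClosure hx)

theorem commute_of_mem_stabilizer (hF : ∀ ω, Subgroup.closure (F ω) = stabilizer Q ω.out)
    {ω : orbitRel.Quotient Q Y} {s : Q} (hs : s ∈ stabilizer Q ω.out) :
    Commute (π (inr s)) (π (inl (FreeGroup.of ω))) := by
  suffices h : stabilizer Q ω.out ≤
      (Subgroup.centralizer {π (inl (FreeGroup.of ω))}).comap (MonoidHom.comp π inr) from
    Subgroup.mem_centralizer_singleton_iff.mp (h hs)
  rw [← hF, Subgroup.closure_le]
  intro s hs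
  have hrel : π ⁅(inr s : Cover Q), (inl (FreeGroup.of ω) : Cover Q)⁆ = 1 :=
    mk_eq_one_of_mem_relators (Or.inl (Set.mem_iUnion.mpr ⟨ω, s, hs, rfl⟩))
  rw [map_commutatorElement, commutatorElement_eq_one_iff_commute] at hrel
  exact Subgroup.mem_centralizer_singleton_iff.mpr hrel

theorem mk_orbitConj_eq (hF : ∀ ω, Subgroup.closure (F ω) = stabilizer Q ω.out)
    {ω : orbitRel.Quotient Q Y} {q q' : Q} (h : q • ω.out = q' • ω.out) :
    π (orbitConj Q q ω) = π (orbitConj Q q' ω) := by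
  have hs : q'⁻¹ * q ∈ stabilizer Q ω.out := by
    rw [mem_stabilizer_iff, mul_smul, h, inv_smul_smul]
  have hq : q = q' * (q'⁻¹ * q) := by group
  simp only [orbitConj, map_mul, map_inv]
  rw [hq, map_mul, map_mul]
  calc _ = π (inr q') * (π (inr (q'⁻¹ * q)) * π (inl (FreeGroup.of ω)) * (π (inr (q'⁻¹ * q)))⁻¹)
        * (π (inr q'))⁻¹ := by group
    _ = _ := by rw [(commute_of_mem_stabilizer hF hs).mul_inv_cancel]

theorem mk_conjGen_smul (hF : ∀ ω, Subgroup.closure (F ω) = stabilizer Q ω.out) (q : Q) (y : Y) :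
    π (conjGen Q (q • y)) = π (inr q) * π (conjGen Q y) * (π (inr q))⁻¹ := by
  have hω : (Quotient.mk'' (q • y) : orbitRel.Quotient Q Y) = Quotient.mk'' y :=
    Quotient.sound' ⟨q, rfl⟩
  have ht := transporter_smul_out Q (q • y)
  unfold conjGen
  rw [hω] at ht ⊢
  rw [mk_orbitConj_eq hF (q' := q * transporter Q y) (by rw [ht, mul_smul, transporter_smul_out])]
  simp only [orbitConj, map_mul, map_inv]
  group

theorem mk_lift_conjGen_map_smul (hF : ∀ ω, Subgroup.closure (F ω) = stabilizer Q ω.out)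
    (q : Q) (w : FreeGroup Y) :
    π (FreeGroup.lift (conjGen Q) (FreeGroup.map (q • ·) w)) =
      MulAut.conj (π (inr q)) (π (FreeGroup.lift (conjGen Q) w)) := by
  have h : ((π).comp (FreeGroup.lift (conjGen Q))).comp (FreeGroup.map (q • ·)) =
      (MulAut.conj (π (inr q))).toMonoidHom.comp ((π).comp (FreeGroup.lift (conjGen Q))) :=
    FreeGroup.ext_hom _ _ fun y => by
      simp only [MonoidHom.comp_apply, FreeGroup.map.of, FreeGroup.lift_apply_of,
        MulEquiv.toMonoidHom_eq_coe, MonoidHom.coe_coe, MulAut.conj_apply]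
      exact mk_conjGen_smul hF q y
  exact DFunLike.congr_fun h w

variable (F R₀) in
noncomputable def ofPresentedGroup (hF : ∀ ω, Subgroup.closure (F ω) = stabilizer Q ω.out)
    (hR : ∀ r ∈ R, ∃ q : Q, ∃ r₀ ∈ R₀, r = FreeGroup.map (q • ·) r₀) :
    PresentedGroup R →* Presentation Q F R₀ :=
  PresentedGroup.toGroup (f := fun y => π (conjGen Q y)) fun r hr => by
    obtain ⟨q, r₀, hr₀, rfl⟩ := hR r hr
    have hlift :
        FreeGroup.lift (fun y => π (conjGen Q y)) = (π).comp (FreeGroup.lift (conjGen Q)) :=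
      FreeGroup.ext_hom _ _ fun y => by simp
    rw [hlift, MonoidHom.comp_apply, mk_lift_conjGen_map_smul hF,
      mk_eq_one_of_mem_relators (Or.inr ⟨r₀, hr₀, rfl⟩), map_one]

variable (Q) in
noncomputable def coverToPresentedGroup : Cover Q →* PresentedGroup R :=
  lift (FreeGroup.lift fun ω => PresentedGroup.of ω.out) Q.subtype

theorem coverToPresentedGroup_conjGen
    (hconj : IsConjAction Q) (y : Y) :
    coverToPresentedGroup Q (conjGen Q y) = PresentedGroup.of y := by
  simp only [coverToPresentedGroup, conjGen, orbitConj, map_mul, map_inv, lift_apply_inl,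
    lift_apply_inr, FreeGroup.lift_apply_of, Subgroup.coe_subtype]
  rw [← hconj, transporter_smul_out]

theorem coverToPresentedGroup_comp_lift_conjGen
    (hconj : IsConjAction Q) :
    (coverToPresentedGroup Q).comp (FreeGroup.lift (conjGen Q)) = PresentedGroup.mk R :=
  FreeGroup.ext_hom _ _ fun y => by
    rw [MonoidHom.comp_apply, FreeGroup.lift_apply_of, coverToPresentedGroup_conjGen hconj]
    rfl

variable (F R₀) in
noncomputable def toPresentedGroup (hF : ∀ ω, F ω ⊆ stabilizer Q ω.out) (hR₀ : R₀ ⊆ R)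
    (hconj : IsConjAction Q) :
    Presentation Q F R₀ →* PresentedGroup R :=
  QuotientGroup.lift _ (coverToPresentedGroup Q) <| Subgroup.normalClosure_le_normal <| by
    rintro _ (h | ⟨r₀, hr₀, rfl⟩)
    · obtain ⟨ω, s, hs, rfl⟩ := Set.mem_iUnion.mp h
      have hsω : (s : PresentedGroup R) * .of ω.out * (s : PresentedGroup R)⁻¹ = .of ω.out := by
        rw [← hconj, hF ω hs]
      simp [coverToPresentedGroup, commutatorElement_def, hsω]
    · have h := DFunLike.congr_fun (coverToPresentedGroup_comp_lift_conjGen hconj) r₀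
      rw [MonoidHom.comp_apply] at h
      rw [SetLike.mem_coe, MonoidHom.mem_ker, h]
      exact PresentedGroup.one_of_mem (hR₀ hr₀)

theorem leftInverse_toPresentedGroup_ofPresentedGroup
    (hF : ∀ ω, Subgroup.closure (F ω) = stabilizer Q ω.out)
    (hR : ∀ r ∈ R, ∃ q : Q, ∃ r₀ ∈ R₀, r = FreeGroup.map (q • ·) r₀) (hR₀ : R₀ ⊆ R)
    (hconj : IsConjAction Q) :
    Function.LeftInverse (toPresentedGroup F R₀ (fun ω => hF ω ▸ Subgroup.subset_closure) hR₀ hconj)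
      (ofPresentedGroup F R₀ hF hR) := by
  have h : (toPresentedGroup F R₀ (fun ω => hF ω ▸ Subgroup.subset_closure) hR₀ hconj).comp
      (ofPresentedGroup F R₀ hF hR) = .id _ :=
    PresentedGroup.ext fun y => by
      simp only [MonoidHom.comp_apply, ofPresentedGroup, PresentedGroup.toGroup.of,
        toPresentedGroup, QuotientGroup.mk'_apply, QuotientGroup.lift_mk,
        coverToPresentedGroup_conjGen hconj, MonoidHom.id_apply]
  exact DFunLike.congr_fun h

end Presentation

end Burnside

theorem burnside_procedure_general (Y : Type*) (R : Set (FreeGroup Y))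
    (Q : Subgroup (PresentedGroup R)) [MulAction Q Y]
    (hconj : ∀ (q : Q) (w : FreeGroup Y),
      PresentedGroup.mk R (FreeGroup.map (fun y => q • y) w)
        = (q : PresentedGroup R) * PresentedGroup.mk R w * (q : PresentedGroup R)⁻¹)
    (hQ : IsFinitelyPresentedGroup Q)
    (hYorb : ∃ Y₀ : Finset Y, ∀ y : Y, ∃ (q : Q), ∃ y₀ ∈ Y₀, y = q • y₀)
    (hRorb : ∃ R₀ ⊆ R, R₀.Finite ∧
      ∀ r ∈ R, ∃ (q : Q), ∃ r₀ ∈ R₀, r = FreeGroup.map (fun y => q • y) r₀)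
    (hstab : ∀ y : Y, (MulAction.stabilizer Q y).FG) :
    IsFinitelyPresentedGroup (PresentedGroup R) := by
  obtain ⟨Y₀, hY₀⟩ := hYorb
  obtain ⟨R₀, hR₀R, hR₀, hR⟩ := hRorb
  choose F hF using fun ω : orbitRel.Quotient Q Y => hstab ω.out
  have := orbitRel.Quotient.finite_of_forall_exists_smul Y₀.finite_toSet hY₀
  have := isFinitelyPresentedGroup_iff.mp hQ
  have : Group.IsFinitelyPresented (Burnside.Presentation Q (fun ω => F ω) R₀) :=
    .quotient _ ⟨_, Burnside.relators_finite (fun ω => (F ω).finite_toSet) hR₀, rfl⟩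
  have hconj_of : Burnside.IsConjAction Q := fun q y => by
    have h := hconj q (.of y)
    rwa [FreeGroup.map.of] at h
  exact isFinitelyPresentedGroup_iff.mpr <| .of_leftInverse <|
    Burnside.leftInverse_toPresentedGroup_ofPresentedGroup hF hR hR₀R hconj_of

/-- Burnside procedure: let `G = ⟨Y ∣ R⟩` and let `Q ≤ G` be a subgroup acting
by permutations on `Y` with `Q(R) = R`, in such a way that the induced action of
`Q` on `G` is conjugation inside `G`. If `Q` is finitely presented, the numbers
of `Q`-orbits on `Y` and on `R` are finite, and each stabilizer `Stab_Q(y)` is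
finitely generated, then `G` is finitely presented. -/
theorem burnside_procedure (Y : Type*) (R : Set (FreeGroup Y))
    (Q : Subgroup (PresentedGroup R)) [MulAction Q Y]
    (hR : ∀ q : Q, (FreeGroup.map (fun y => q • y)) '' R = R)
    (hconj : ∀ (q : Q) (w : FreeGroup Y),
      PresentedGroup.mk R (FreeGroup.map (fun y => q • y) w)
        = (q : PresentedGroup R) * PresentedGroup.mk R w * (q : PresentedGroup R)⁻¹)
    (hQ : IsFinitelyPresentedGroup Q)
    (hYorb : ∃ Y₀ : Finset Y, ∀ y : Y, ∃ (q : Q), ∃ y₀ ∈ Y₀, y = q • y₀)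
    (hRorb : ∃ R₀ ⊆ R, R₀.Finite ∧
      ∀ r ∈ R, ∃ (q : Q), ∃ r₀ ∈ R₀, r = FreeGroup.map (fun y => q • y) r₀)
    (hstab : ∀ y : Y, (MulAction.stabilizer Q y).FG) :
    IsFinitelyPresentedGroup (PresentedGroup R) :=
  burnside_procedure_general Y R Q hconj hQ hYorb hRorb hstab
end
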